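/- Let ℒ : ℝ^p → ℝ be twice continuously differentiable with −L I ⪯ ∇²ℒ(θ') ⪯ L I for all θ' (L-smoothness), and let λ > L. Define 𝒥(θ, θ') = ℒ(θ') + (λ/2)‖θ' − θ‖². Then: (a) for each θ ∈ ℝ^p, the map θ' ↦ 𝒥(θ, θ') satisfies ∇²_{θ'θ'} 𝒥(θ, θ') ⪰ (λ − L) I, so it is (λ−L)-strongly convex and has a unique minimizer θ*(θ); and (b) the function Φ(θ) = ℒ(θ*(θ)) is differentiable with ∇Φ(θ) = λ² [∇²ℒ(θ*(θ)) + λ I]^{-1} (θ − θ*(θ)). -/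

import Mathlib

open scoped RealInnerProductSpace

/-!
The inner objective `J θ` has gradient `∇L + λ (· - θ)` and Hessian `∇²L + λ I ⪰ (λ - L) I`.
Hence its gradient is strongly monotone, which yields the quadratic minorant
`J θ x + ⟪∇(J θ) x, y - x⟫ + (λ - L)/2 ‖y - x‖² ≤ J θ y`; strong convexity, coercivity and the
uniqueness of the minimiser all follow from it.

The minimiser is characterised by `∇L (θ*) = λ (θ - θ*)`, i.e. `T θ* = λ θ` with `T = ∇L + λ id`.
Strong monotonicity of `T` makes `θ*` continuous, Lax–Milgram inverts `T' = ∇²L + λ I`, and the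
easy half of the inverse function theorem gives `Dθ* = λ (∇²L(θ*) + λ I)⁻¹`. This operator is
self-adjoint by the symmetry of second derivatives, so the chain rule gives
`∇Φ = λ (∇²L(θ*) + λ I)⁻¹ ∇L(θ*) = λ² (∇²L(θ*) + λ I)⁻¹ (θ - θ*)`.
-/

open InnerProductSpace Filter Topology

section Hilbert

variable {F : Type*} [NormedAddCommGroup F] [InnerProductSpace ℝ F]

def IsStronglyMonotone (m : ℝ) (T : F → F) : Prop :=
  ∀ x y, m * ‖y - x‖ ^ 2 ≤ ⟪T y - T x, y - x⟫

namespace IsStronglyMonotone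

variable {m : ℝ} {T : F → F}

theorem of_hasFDerivAt {T' : F → F →L[ℝ] F} (hT : ∀ x, HasFDerivAt T (T' x) x)
    (hT' : ∀ x v, m * ‖v‖ ^ 2 ≤ ⟪T' x v, v⟫) : IsStronglyMonotone m T := by
  intro x y
  set d := y - x
  have hderiv : ∀ t : ℝ, HasDerivAt (fun s : ℝ => ⟪T (x + s • d), d⟫ - s * (m * ‖d‖ ^ 2))
      (⟪T' (x + t • d) d, d⟫ - m * ‖d‖ ^ 2) t := by
    intro t
    have hline : HasDerivAt (fun s : ℝ => x + s • d) d t := by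
      simpa using ((hasDerivAt_id t).smul_const d).const_add x
    have hinner : HasDerivAt (fun s : ℝ => ⟪T (x + s • d), d⟫) ⟪T' (x + t • d) d, d⟫ t := by
      simpa using ((hT _).comp_hasDerivAt t hline).inner ℝ (hasDerivAt_const t d)
    exact hinner.sub (by simpa using (hasDerivAt_id t).mul_const (m * ‖d‖ ^ 2))
  have := monotone_of_hasDerivAt_nonneg hderiv (fun t => sub_nonneg.2 (hT' _ d)) zero_le_one
  simp only [zero_smul, add_zero, one_smul, zero_mul, sub_zero, one_mul, d,
    add_sub_cancel] at this
  rw [inner_sub_left]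
  linarith

theorem norm_sub_le_inv_mul (hT : IsStronglyMonotone m T) (hm : 0 < m) (x y : F) :
    ‖x - y‖ ≤ m⁻¹ * ‖T x - T y‖ := by
  rw [le_inv_mul_iff₀ hm]
  rcases (norm_nonneg (x - y)).eq_or_lt with h | h
  · rw [← h, mul_zero]; exact norm_nonneg _
  · refine le_of_mul_le_mul_right ?_ h
    calc m * ‖x - y‖ * ‖x - y‖ = m * ‖x - y‖ ^ 2 := by ring
      _ ≤ ⟪T x - T y, x - y⟫ := hT y x
      _ ≤ ‖T x - T y‖ * ‖x - y‖ := real_inner_le_norm _ _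

theorem continuous_of_continuous_comp {X : Type*} [TopologicalSpace X] {Z : X → F}
    (hT : IsStronglyMonotone m T) (hm : 0 < m) (hTZ : Continuous (T ∘ Z)) : Continuous Z := by
  refine continuous_iff_continuousAt.2 fun a => tendsto_iff_norm_sub_tendsto_zero.2 ?_
  have h := (tendsto_iff_norm_sub_tendsto_zero.1 (hTZ.tendsto a)).const_mul m⁻¹
  rw [mul_zero] at h
  exact squeeze_zero (fun _ => norm_nonneg _) (fun y => hT.norm_sub_le_inv_mul hm _ _) h

theorem add_inner_add_le_of_hasGradientAt [CompleteSpace F] {f : F → ℝ}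
    (hT : IsStronglyMonotone m T) (hf : ∀ x, HasGradientAt f (T x) x) (x y : F) :
    f x + ⟪T x, y - x⟫ + m / 2 * ‖y - x‖ ^ 2 ≤ f y := by
  set d := y - x
  set φ : ℝ → ℝ := fun t => f (x + t • d) - t * ⟪T x, d⟫ - m / 2 * t ^ 2 * ‖d‖ ^ 2
  have hderiv : ∀ t : ℝ, HasDerivAt φ (⟪T (x + t • d) - T x, d⟫ - m * t * ‖d‖ ^ 2) t := by
    intro t
    have hline : HasDerivAt (fun s : ℝ => x + s • d) d t := by
      simpa using ((hasDerivAt_id t).smul_const d).const_add x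
    have h1 : HasDerivAt (fun s : ℝ => f (x + s • d)) ⟪T (x + t • d), d⟫ t := by
      have := (hf _).hasFDerivAt.comp_hasDerivAt t hline
      simp only [toDual_apply_apply] at this
      exact this
    have h2 : HasDerivAt (fun s : ℝ => s * ⟪T x, d⟫) ⟪T x, d⟫ t := by
      simpa using (hasDerivAt_id t).mul_const ⟪T x, d⟫
    have h3 : HasDerivAt (fun s : ℝ => m / 2 * s ^ 2 * ‖d‖ ^ 2) (m * t * ‖d‖ ^ 2) t :=
      (((hasDerivAt_pow 2 t).const_mul (m / 2)).mul_const (‖d‖ ^ 2)).congr_deriv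
        (by push_cast; ring)
    exact ((h1.sub h2).sub h3).congr_deriv (by rw [inner_sub_left])
  have hnonneg : ∀ t ∈ interior (Set.Ici (0 : ℝ)),
      0 ≤ ⟪T (x + t • d) - T x, d⟫ - m * t * ‖d‖ ^ 2 := by
    rw [interior_Ici]
    intro t ht
    have h := hT x (x + t • d)
    simp only [add_sub_cancel_left, norm_smul, inner_smul_right, mul_pow, Real.norm_eq_abs,
      sq_abs] at h
    have h' : t * (m * t * ‖d‖ ^ 2) ≤ t * ⟪T (x + t • d) - T x, d⟫ := by linarith
    linarith [le_of_mul_le_mul_left h' ht]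
  have hmono := monotoneOn_of_hasDerivWithinAt_nonneg (convex_Ici 0)
    (fun t _ => (hderiv t).continuousAt.continuousWithinAt)
    (fun t _ => (hderiv t).hasDerivWithinAt) hnonneg
  have := hmono Set.self_mem_Ici (Set.mem_Ici.2 zero_le_one) zero_le_one
  simp only [φ, zero_smul, add_zero, one_smul, zero_mul, sub_zero, one_mul, d,
    add_sub_cancel, one_pow, ne_eq, OfNat.ofNat_ne_zero, not_false_eq_true, zero_pow,
    mul_zero] at this
  linarith

end IsStronglyMonotone

section QuadraticMinorant

variable {f : F → ℝ} {T : F → F} {m : ℝ}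

theorem strongConvexOn_univ_of_add_inner_add_le
    (hbound : ∀ x y, f x + ⟪T x, y - x⟫ + m / 2 * ‖y - x‖ ^ 2 ≤ f y) :
    StrongConvexOn Set.univ m f := by
  refine ⟨convex_univ, fun x _ y _ a b ha hb hab => ?_⟩
  obtain rfl : b = 1 - a := by linarith
  set z := a • x + (1 - a) • y
  have hxz : x - z = (1 - a) • (x - y) := by module
  have hyz : y - z = a • (y - x) := by module
  have hcancel : a * ⟪T z, x - z⟫ + (1 - a) * ⟪T z, y - z⟫ = 0 := by
    rw [hxz, hyz, inner_smul_right, inner_smul_right, ← neg_sub x y, inner_neg_right]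
    ring
  have hnx : ‖x - z‖ = (1 - a) * ‖x - y‖ := by rw [hxz, norm_smul, Real.norm_of_nonneg hb]
  have hny : ‖y - z‖ = a * ‖x - y‖ := by
    rw [hyz, norm_smul, Real.norm_of_nonneg ha, norm_sub_rev]
  have hx := hbound z x
  have hy := hbound z y
  rw [hnx] at hx
  rw [hny] at hy
  simp only [smul_eq_mul]
  nlinarith [mul_le_mul_of_nonneg_left hx ha, mul_le_mul_of_nonneg_left hy hb]

variable [CompleteSpace F]

theorem forall_le_iff_eq_zero_of_add_inner_add_le (hf : ∀ x, HasGradientAt f (T x) x) (hm : 0 ≤ m)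
    (hbound : ∀ x y, f x + ⟪T x, y - x⟫ + m / 2 * ‖y - x‖ ^ 2 ≤ f y) (z : F) :
    (∀ y, f z ≤ f y) ↔ T z = 0 := by
  refine ⟨fun hmin => ?_, fun hz y => ?_⟩
  · have h := (IsLocalMin.hasFDerivAt_eq_zero (Eventually.of_forall hmin) (hf z).hasFDerivAt)
    simpa using h
  · have := hbound z y
    rw [hz, inner_zero_left, add_zero] at this
    nlinarith [sq_nonneg ‖y - z‖]

theorem existsUnique_forall_le_of_add_inner_add_le [FiniteDimensional ℝ F]
    (hf : ∀ x, HasGradientAt f (T x) x) (hm : 0 < m)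
    (hbound : ∀ x y, f x + ⟪T x, y - x⟫ + m / 2 * ‖y - x‖ ^ 2 ≤ f y) :
    ∃! z, ∀ y, f z ≤ f y := by
  have hcont : Continuous f := continuous_iff_continuousAt.2 fun x =>
    (hf x).differentiableAt.continuousAt
  have hfar : ∀ᶠ y in cocompact F, f 0 ≤ f y := by
    filter_upwards [tendsto_norm_cocompact_atTop.eventually (eventually_ge_atTop (2 / m * ‖T 0‖))]
      with y hy
    have h := hbound 0 y
    have hinner : -(‖T 0‖ * ‖y‖) ≤ ⟪T 0, y⟫ := neg_le_of_abs_le (abs_real_inner_le_norm _ _)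
    rw [div_mul_eq_mul_div, div_le_iff₀ hm] at hy
    simp only [sub_zero] at h
    nlinarith [norm_nonneg y]
  obtain ⟨z, hz⟩ := hcont.exists_forall_le' 0 hfar
  refine ⟨z, hz, fun w hw => ?_⟩
  have hTw := (forall_le_iff_eq_zero_of_add_inner_add_le hf hm.le hbound w).1 hw
  have h := hbound w z
  rw [hTw, inner_zero_left, add_zero] at h
  have hzw : ‖z - w‖ ^ 2 ≤ 0 := by nlinarith [hz w, hw z]
  exact (sub_eq_zero.1 (norm_eq_zero.1 (pow_eq_zero_iff two_ne_zero |>.1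
    (hzw.antisymm (sq_nonneg _))))).symm

end QuadraticMinorant

variable [CompleteSpace F]

theorem ContinuousLinearMap.isInvertible_of_coercive {K : F →L[ℝ] F} {m : ℝ} (hm : 0 < m)
    (hK : ∀ v, m * ‖v‖ ^ 2 ≤ ⟪K v, v⟫) : K.IsInvertible := by
  have hcoer : IsCoercive ((innerSL ℝ).comp K) :=
    ⟨m, hm, fun v => by simpa [sq, mul_assoc] using hK v⟩
  refine ⟨hcoer.continuousLinearEquivOfBilin, ContinuousLinearMap.ext fun v => ?_⟩
  exact ext_inner_right ℝ fun w => by simp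

theorem isSelfAdjoint_fderiv_gradient {L : F → ℝ} (hL : ContDiff ℝ 2 L) (x : F) :
    IsSelfAdjoint (fderiv ℝ (gradient L) x) := by
  have hD : HasFDerivAt (fderiv ℝ L) (fderiv ℝ (fderiv ℝ L) x) x :=
    ((hL.fderiv_right (m := 1) (by norm_num)).differentiable one_ne_zero x).hasFDerivAt
  have hH : ∀ v w, ⟪fderiv ℝ (gradient L) x v, w⟫ = fderiv ℝ (fderiv ℝ L) x v w := by
    intro v w
    have : HasFDerivAt (gradient L)
        ((toDual ℝ F).symm.toContinuousLinearEquiv.toContinuousLinearMap.comp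
          (fderiv ℝ (fderiv ℝ L) x)) x :=
      (toDual ℝ F).symm.toContinuousLinearEquiv.hasFDerivAt.comp x hD
    rw [this.fderiv]
    simp
  have hsymm := (hL.contDiffAt (x := x)).isSymmSndFDerivAt (by simp)
  refine ContinuousLinearMap.isSelfAdjoint_iff_isSymmetric.2 fun v w => ?_
  simp only [ContinuousLinearMap.coe_coe]
  rw [hH, real_inner_comm, hH, hsymm]

theorem HasGradientAt.comp_hasFDerivAt {f : F → ℝ} {g : F → F} {f' : F} {A : F →L[ℝ] F} {x : F}
    (hf : HasGradientAt f f' (g x)) (hg : HasFDerivAt g A x) :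
    HasGradientAt (fun y => f (g y)) (A.adjoint f') x := by
  rw [hasGradientAt_iff_hasFDerivAt]
  refine (hf.hasFDerivAt.comp x hg).congr_fderiv (ContinuousLinearMap.ext fun v => ?_)
  simp [ContinuousLinearMap.adjoint_inner_left]

theorem ContDiff.differentiable_gradient {L : F → ℝ} (hL : ContDiff ℝ 2 L) :
    Differentiable ℝ (gradient L) :=
  ((toDual ℝ F).symm.toContinuousLinearEquiv.contDiff.comp
    (hL.fderiv_right (m := 1) (by norm_num))).differentiable one_ne_zero

theorem hasGradientAt_add_mul_norm_sub_sq {L : F → ℝ} {x : F} (hL : DifferentiableAt ℝ L x)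
    (lam : ℝ) (θ : F) :
    HasGradientAt (fun y => L y + lam / 2 * ‖y - θ‖ ^ 2) (gradient L x + lam • (x - θ)) x := by
  rw [hasGradientAt_iff_hasFDerivAt]
  refine (hL.hasGradientAt.hasFDerivAt.add
    (((hasFDerivAt_id x).sub_const θ).norm_sq.const_mul (lam / 2))).congr_fderiv ?_
  ext v
  simp
  ring

theorem hasFDerivAt_of_gradient_eq_smul_sub {L : F → ℝ} {θstar : F → F} {lam m : ℝ}
    (hL : ContDiff ℝ 2 L) (hm : 0 < m)
    (hcoer : ∀ x v, m * ‖v‖ ^ 2 ≤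
      ⟪(fderiv ℝ (gradient L) x + lam • ContinuousLinearMap.id ℝ F) v, v⟫)
    (hstat : ∀ θ, gradient L (θstar θ) = lam • (θ - θstar θ)) (θ : F) :
    HasFDerivAt θstar
      (lam • Ring.inverse (fderiv ℝ (gradient L) (θstar θ) + lam • ContinuousLinearMap.id ℝ F))
      θ := by
  set K : F → F →L[ℝ] F := fun x => fderiv ℝ (gradient L) x + lam • ContinuousLinearMap.id ℝ F
  have hT : ∀ x, HasFDerivAt (fun y => gradient L y + lam • y) (K x) x := fun x =>
    (hL.differentiable_gradient x).hasFDerivAt.add ((hasFDerivAt_id x).const_smul lam)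
  have hTθstar : ∀ θ, gradient L (θstar θ) + lam • θstar θ = lam • θ := fun θ => by
    rw [hstat, smul_sub, sub_add_cancel]
  have hcont : Continuous θstar :=
    (IsStronglyMonotone.of_hasFDerivAt hT hcoer).continuous_of_continuous_comp hm
      (by simpa [Function.comp_def, hTθstar] using continuous_const_smul lam)
  have hK : (K (θstar θ)).IsInvertible :=
    ContinuousLinearMap.isInvertible_of_coercive hm (hcoer (θstar θ))
  have hinv : Function.LeftInverse ⇑(Ring.inverse (K (θstar θ))) (K (θstar θ)) := fun v => by
    rw [ContinuousLinearMap.ringInverse_eq_inverse]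
    exact hK.inverse_apply_eq.2 rfl
  have := HasFDerivAt.of_comp_of_leftInverse hcont.continuousAt (hT _)
    ((hasFDerivAt_id θ).const_smul lam) (Eventually.of_forall hTθstar) hinv
  rwa [ContinuousLinearMap.comp_smul, ContinuousLinearMap.comp_id] at this

theorem hasGradientAt_comp_of_gradient_eq_smul_sub {L : F → ℝ} {θstar : F → F} {lam m : ℝ}
    (hL : ContDiff ℝ 2 L) (hm : 0 < m)
    (hcoer : ∀ x v, m * ‖v‖ ^ 2 ≤
      ⟪(fderiv ℝ (gradient L) x + lam • ContinuousLinearMap.id ℝ F) v, v⟫)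
    (hstat : ∀ θ, gradient L (θstar θ) = lam • (θ - θstar θ)) (θ : F) :
    HasGradientAt (fun θ => L (θstar θ))
      (lam ^ 2 • Ring.inverse (fderiv ℝ (gradient L) (θstar θ) + lam • ContinuousLinearMap.id ℝ F)
        (θ - θstar θ)) θ := by
  have hK : IsSelfAdjoint (fderiv ℝ (gradient L) (θstar θ) + lam • ContinuousLinearMap.id ℝ F) :=
    (isSelfAdjoint_fderiv_gradient hL _).add
      ((IsSelfAdjoint.all lam).smul (by rw [← ContinuousLinearMap.one_def]; exact .one _))
  have hΦ := (hL.differentiable (by norm_num) (θstar θ)).hasGradientAt.comp_hasFDerivAt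
    (hasFDerivAt_of_gradient_eq_smul_sub hL hm hcoer hstat θ)
  rw [((IsSelfAdjoint.all lam).smul hK.ringInverse).adjoint_eq, hstat] at hΦ
  convert hΦ using 1
  rw [smul_apply, map_smul, smul_smul, sq]

end Hilbert

theorem maml_bilevel_general
    {p : ℕ}
    (L : EuclideanSpace ℝ (Fin p) → ℝ)
    (Lc lam : ℝ) (hlam : Lc < lam)
    (hL_smooth : ContDiff ℝ 2 L)
    (hL_hess : ∀ θ' (v : EuclideanSpace ℝ (Fin p)),
      -Lc * ‖v‖ ^ 2 ≤ ⟪fderiv ℝ (gradient L) θ' v, v⟫ ∧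
        ⟪fderiv ℝ (gradient L) θ' v, v⟫ ≤ Lc * ‖v‖ ^ 2)
    -- the inner objective `𝒥(θ, θ') = ℒ(θ') + (λ/2)‖θ' − θ‖²`
    (J : EuclideanSpace ℝ (Fin p) → EuclideanSpace ℝ (Fin p) → ℝ)
    (hJ : ∀ θ θ', J θ θ' = L θ' + (lam / 2) * ‖θ' - θ‖ ^ 2) :
    -- (a) strong convexity of the inner objective and uniqueness of the inner minimizer
    ((∀ θ θ' (v : EuclideanSpace ℝ (Fin p)),
        (lam - Lc) * ‖v‖ ^ 2 ≤ ⟪fderiv ℝ (gradient (J θ)) θ' v, v⟫) ∧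
      (∀ θ, StrongConvexOn Set.univ (lam - Lc) (J θ)) ∧
      (∀ θ, ∃! θs : EuclideanSpace ℝ (Fin p), ∀ θ', J θ θs ≤ J θ θ')) ∧
    -- (b) the hypergradient formula for `Φ(θ) = ℒ(θ*(θ))`
    (∃ θstar : EuclideanSpace ℝ (Fin p) → EuclideanSpace ℝ (Fin p),
      (∀ θ θ', J θ (θstar θ) ≤ J θ θ') ∧
      Differentiable ℝ (fun θ => L (θstar θ)) ∧
      ∀ θ, gradient (fun θ'' => L (θstar θ'')) θ =
        lam ^ 2 •
          (Ring.inverse (fderiv ℝ (gradient L) (θstar θ) +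
              lam • ContinuousLinearMap.id ℝ (EuclideanSpace ℝ (Fin p))))
            (θ - θstar θ)) := by
  have hm : 0 < lam - Lc := sub_pos.2 hlam
  have hgradJ : ∀ θ x, HasGradientAt (J θ) (gradient L x + lam • (x - θ)) x := fun θ x => by
    simpa only [← hJ] using
      hasGradientAt_add_mul_norm_sub_sq (hL_smooth.differentiable (by norm_num) x) lam θ
  have hhessJ : ∀ θ x, HasFDerivAt (fun y => gradient L y + lam • (y - θ))
      (fderiv ℝ (gradient L) x + lam • ContinuousLinearMap.id ℝ (EuclideanSpace ℝ (Fin p)))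
      x := fun θ x =>
    (hL_smooth.differentiable_gradient x).hasFDerivAt.add
      (((hasFDerivAt_id x).sub_const θ).const_smul lam)
  have hcoer : ∀ x v, (lam - Lc) * ‖v‖ ^ 2 ≤
      ⟪(fderiv ℝ (gradient L) x + lam • ContinuousLinearMap.id ℝ (EuclideanSpace ℝ (Fin p))) v,
        v⟫ := fun x v => by
    rw [add_apply, smul_apply, ContinuousLinearMap.id_apply, inner_add_left, real_inner_smul_left,
      real_inner_self_eq_norm_sq]
    linarith [(hL_hess x v).1]
  have hbound : ∀ θ x y, J θ x + ⟪gradient L x + lam • (x - θ), y - x⟫ +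
      (lam - Lc) / 2 * ‖y - x‖ ^ 2 ≤ J θ y := fun θ =>
    (IsStronglyMonotone.of_hasFDerivAt (hhessJ θ) hcoer).add_inner_add_le_of_hasGradientAt
      (hgradJ θ)
  have hEU : ∀ θ, ∃! θs, ∀ θ', J θ θs ≤ J θ θ' := fun θ =>
    existsUnique_forall_le_of_add_inner_add_le (hgradJ θ) hm (hbound θ)
  refine ⟨⟨fun θ x v => ?_, fun θ => strongConvexOn_univ_of_add_inner_add_le (hbound θ), hEU⟩, ?_⟩
  · rw [gradient_eq (hgradJ θ), (hhessJ θ x).fderiv]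
    exact hcoer x v
  choose θstar hmin using fun θ => (hEU θ).exists
  have hstat : ∀ θ, gradient L (θstar θ) = lam • (θ - θstar θ) := fun θ => by
    have h := (forall_le_iff_eq_zero_of_add_inner_add_le (hgradJ θ) hm.le (hbound θ) _).1
      (hmin θ)
    rwa [← neg_sub, smul_neg, add_neg_eq_zero] at h
  have hΦ := hasGradientAt_comp_of_gradient_eq_smul_sub hL_smooth hm hcoer hstat
  exact ⟨θstar, hmin, fun θ => (hΦ θ).differentiableAt, fun θ => (hΦ θ).gradient⟩

/-- (MAML bilevel structure.) Let `ℒ` be `C²` with `−L I ⪯ ∇²ℒ ⪯ L I`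
and let `λ > L`. Define `𝒥(θ, θ') = ℒ(θ') + (λ/2)‖θ' − θ‖²`. Then (a) for each `θ`,
`θ' ↦ 𝒥(θ, θ')` has Hessian `⪰ (λ − L) I`, is `(λ−L)`-strongly convex and has a unique
minimizer `θ*(θ)`; and (b) `Φ(θ) = ℒ(θ*(θ))` is differentiable with
`∇Φ(θ) = λ²[∇²ℒ(θ*(θ)) + λI]⁻¹(θ − θ*(θ))`. -/
theorem maml_bilevel
    {p : ℕ}
    (L : EuclideanSpace ℝ (Fin p) → ℝ)
    (Lc lam : ℝ) (hLc : 0 < Lc) (hlam : Lc < lam)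
    (hL_smooth : ContDiff ℝ 2 L)
    (hL_hess : ∀ θ' (v : EuclideanSpace ℝ (Fin p)),
      -Lc * ‖v‖ ^ 2 ≤ ⟪fderiv ℝ (gradient L) θ' v, v⟫ ∧
        ⟪fderiv ℝ (gradient L) θ' v, v⟫ ≤ Lc * ‖v‖ ^ 2)
    -- the inner objective `𝒥(θ, θ') = ℒ(θ') + (λ/2)‖θ' − θ‖²`
    (J : EuclideanSpace ℝ (Fin p) → EuclideanSpace ℝ (Fin p) → ℝ)
    (hJ : ∀ θ θ', J θ θ' = L θ' + (lam / 2) * ‖θ' - θ‖ ^ 2) :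
    -- (a) strong convexity of the inner objective and uniqueness of the inner minimizer
    ((∀ θ θ' (v : EuclideanSpace ℝ (Fin p)),
        (lam - Lc) * ‖v‖ ^ 2 ≤ ⟪fderiv ℝ (gradient (J θ)) θ' v, v⟫) ∧
      (∀ θ, StrongConvexOn Set.univ (lam - Lc) (J θ)) ∧
      (∀ θ, ∃! θs : EuclideanSpace ℝ (Fin p), ∀ θ', J θ θs ≤ J θ θ')) ∧
    -- (b) the hypergradient formula for `Φ(θ) = ℒ(θ*(θ))`
    (∃ θstar : EuclideanSpace ℝ (Fin p) → EuclideanSpace ℝ (Fin p),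
      (∀ θ θ', J θ (θstar θ) ≤ J θ θ') ∧
      Differentiable ℝ (fun θ => L (θstar θ)) ∧
      ∀ θ, gradient (fun θ'' => L (θstar θ'')) θ =
        lam ^ 2 •
          (Ring.inverse (fderiv ℝ (gradient L) (θstar θ) +
              lam • ContinuousLinearMap.id ℝ (EuclideanSpace ℝ (Fin p))))
            (θ - θstar θ)) :=
  maml_bilevel_general L Lc lam hlam hL_smooth hL_hess J hJ
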